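/- Let H be a finite-dimensional complex inner product space, Ψ a unit vector, W = |Ψ⟩⟨Ψ| the associated pure density matrix, and Λ a positive semidefinite self-adjoint operator with Λ^{1/2} Ψ ≠ 0. Then tr(W ∘ Λ) = ‖Λ^{1/2} Ψ‖², and the W-GRW collapsed state ( Λ^{1/2} ∘ W ∘ Λ^{1/2} ) / tr(W ∘ Λ) equals the pure density matrix |Ψ'⟩⟨Ψ'| where Ψ' = Λ^{1/2} Ψ / ‖Λ^{1/2} Ψ‖ is the Ψ-GRW collapsed wave function. Hence the W-GRW collapse rule generalizes the Ψ-GRW collapse rule, with matching collapse probabilities. -/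

import Mathlib

open scoped ComplexInnerProductSpace

/-- The rank-one operator `|ψ⟩⟨ψ| : φ ↦ ⟪ψ, φ⟫ • ψ`, as a linear map. -/
noncomputable def ketbraL {H : Type*} [NormedAddCommGroup H] [InnerProductSpace ℂ H]
    (ψ : H) : H →ₗ[ℂ] H :=
  ((innerSL ℂ ψ).smulRight ψ).toLinearMap

lemma trace_ketbraL_comp {H : Type*} [NormedAddCommGroup H] [InnerProductSpace ℂ H]
    [FiniteDimensional ℂ H] (ψ : H) (T : H →ₗ[ℂ] H) :
    LinearMap.trace ℂ H (ketbraL ψ ∘ₗ T) = ⟪ψ, T ψ⟫ := by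
  have h : ketbraL ψ ∘ₗ T
      = dualTensorHom ℂ H H (((innerSL ℂ ψ).toLinearMap ∘ₗ T) ⊗ₜ ψ) := by
    ext φ
    simp [ketbraL, dualTensorHom_apply]
  rw [h, LinearMap.trace_eq_contract_apply, contractLeft_apply]
  simp

/-- for a unit vector `Ψ`, the pure density matrix `W = |Ψ⟩⟨Ψ|`, and a
positive semidefinite self-adjoint `Λ` with positive semidefinite self-adjoint square root
`S = Λ^{1/2}` such that `S Ψ ≠ 0`: `tr(W Λ) = ‖Λ^{1/2}Ψ‖²`, and the W-GRW collapsed state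
`Λ^{1/2} W Λ^{1/2} / tr(W Λ)` is the pure state `|Ψ'⟩⟨Ψ'|` of the Ψ-GRW collapsed wave
function `Ψ' = Λ^{1/2}Ψ / ‖Λ^{1/2}Ψ‖`. -/
theorem stmt_16 {H : Type*} [NormedAddCommGroup H] [InnerProductSpace ℂ H]
    [FiniteDimensional ℂ H]
    (Ψ : H) (hΨ : ‖Ψ‖ = 1)
    (Λ S : H →ₗ[ℂ] H)
    (hΛsa : Λ.IsSymmetric) (hΛpos : ∀ x : H, 0 ≤ (⟪x, Λ x⟫).re)
    (hSsa : S.IsSymmetric) (hSpos : ∀ x : H, 0 ≤ (⟪x, S x⟫).re)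
    (hSsq : S ∘ₗ S = Λ)
    (hSΨ : S Ψ ≠ 0) :
    LinearMap.trace ℂ H (ketbraL Ψ ∘ₗ Λ) = ((‖S Ψ‖ : ℂ)) ^ 2 ∧
    (LinearMap.trace ℂ H (ketbraL Ψ ∘ₗ Λ))⁻¹ • (S ∘ₗ ketbraL Ψ ∘ₗ S)
      = ketbraL ((‖S Ψ‖)⁻¹ • S Ψ) := by
  have htr : LinearMap.trace ℂ H (ketbraL Ψ ∘ₗ Λ) = ((‖S Ψ‖ : ℂ)) ^ 2 := by
    rw [trace_ketbraL_comp, ← hSsq]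
    have : ⟪Ψ, (S ∘ₗ S) Ψ⟫ = ⟪S Ψ, S Ψ⟫ := by
      simpa using (hSsa Ψ (S Ψ)).symm
    rw [this, inner_self_eq_norm_sq_to_K]
    norm_num
  refine ⟨htr, ?_⟩
  have hnorm : (‖S Ψ‖ : ℂ) ≠ 0 := by
    simpa using norm_ne_zero_iff.mpr hSΨ
  ext φ
  have hsym : ⟪S Ψ, φ⟫ = ⟪Ψ, S φ⟫ := hSsa Ψ φ
  rw [LinearMap.smul_apply, htr]
  simp only [ketbraL, LinearMap.smul_apply, LinearMap.coe_comp, Function.comp_apply,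
    ContinuousLinearMap.coe_coe, ContinuousLinearMap.smulRight_apply, innerSL_apply_apply,
    inner_smul_left, inner_smul_right, map_smul, ← hsym]
  rw [show (‖S Ψ‖⁻¹ • S Ψ : H) = ((‖S Ψ‖⁻¹ : ℝ) : ℂ) • S Ψ from (algebraMap_smul ℂ _ _).symm,
    smul_smul, inner_smul_left, Complex.conj_ofReal]
  rw [smul_smul]
  congr 1
  push_cast
  field_simp
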